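/- arXiv:1505.04137 — 6 statements merged into one kernel-verified Lean document; each statement's English description precedes it below -/
import Mathlib

section
/- Let n ≥ 2, τ ∈ (0,1), X a measurable space, and D a probability measure on X × [n]. Then for every measurable f : X → R^n, er^ℓ_D[pred^CS_τ ∘ f] − er^{ℓ,*}_D ≤ ( er^{ψ^CS}_D[f] − er^{ψ^CS,*}_D ) / ( 2 min(τ, 1−τ) ), where ℓ = ℓ^{1/2} is the abstain(1/2) loss. -/
open scoped BigOperators
open MeasureTheory

/-- The abstain(1/2) loss is `abstainLoss n (1/2)`. -/
noncomputable def abstainLoss (n : ℕ) (α : ℝ) (y : Fin n) (t : Fin (n + 1)) : ℝ :=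
  if t = Fin.last n then α else if (t : ℕ) = (y : ℕ) then 0 else 1

/-- Crammer–Singer surrogate: `ψ^CS(y,u) = max(0, max_{j≠y} u_j − u_y + 1)`. -/
noncomputable def psiCS (n : ℕ) (y : Fin n) (u : Fin n → ℝ) : ℝ :=
  max ((⨆ j : {j : Fin n // j ≠ y}, u j.1) - u y + 1) 0

/-- The largest component of `u`. -/
noncomputable def top1 (n : ℕ) (u : Fin n → ℝ) : ℝ := ⨆ i, u i

/-- The second-largest component of `u` (descending order, with multiplicity). -/
noncomputable def top2 (n : ℕ) (u : Fin n → ℝ) : ℝ :=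
  ⨅ i, ⨆ j : {j : Fin n // j ≠ i}, u j.1

/-- `pred^CS_τ`: an index attaining `max_i u_i` if `u_(1) − u_(2) > τ` (the maximizer is
unique in this case), and `n+1` otherwise. -/
noncomputable def predCS (n : ℕ) (τ : ℝ) (u : Fin n → ℝ) : Fin (n + 1) :=
  if h : (τ < top1 n u - top2 n u) ∧ ∃ y : Fin n, ∀ i, u i ≤ u y then
    Fin.castSucc h.2.choose
  else Fin.last n

open scoped ENNReal
open MeasureTheory ProbabilityTheory

/-!
Conditioning on `x` (through `D.condKernel`) reduces the theorem to a pointwise inequality for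
a probability vector `p` and a score vector `u`. Let `i` maximize `u` and let
`g = u i - max_{j ≠ i} u j` be its margin. Then `ψ(i, u) ≥ 1 - g` and `ψ(y, u) ≥ 1 + g` for
`y ≠ i`, so the conditional surrogate risk is at least `1 + g (1 - 2 p i)` and at least
`(1 - p i) (1 + g)`. On the other side, the surrogate Bayes risk is at most
`min 1 (2 (1 - max p))` (take `u = 0`, or the indicator of a class of probability `> 1/2`), and
the abstain Bayes risk is `min (1 - max p) (1/2)`. Distinguishing whether `pred^CS_τ` predicts
`i` (`g > τ`) or abstains (`g ≤ τ`) gives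
`2 min(τ, 1 - τ) · (excess abstain risk) ≤ (excess surrogate risk)` pointwise, and integrating
against the marginal of `D` proves the theorem.
-/

theorem sum_mul_ite_eq {ι : Type*} [Fintype ι] [DecidableEq ι] {p : ι → ℝ} (hp : ∑ y, p y = 1)
    (i : ι) (a b : ℝ) : ∑ y, p y * (if y = i then a else b) = b + p i * (a - b) := by
  have (y : ι) : p y * (if y = i then a else b) = p y * b + if y = i then p y * (a - b) else 0 := by
    split_ifs <;> ring
  simp only [this, Finset.sum_add_distrib, ← Finset.sum_mul, hp, Finset.sum_ite_eq',
    Finset.mem_univ, if_true, one_mul]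

theorem le_one_sub_of_ne {ι : Type*} [Fintype ι] {p : ι → ℝ} (hp0 : ∀ y, 0 ≤ p y)
    (hp : ∑ y, p y = 1) {i j : ι} (h : j ≠ i) : p j ≤ 1 - p i := by
  classical
  have := Finset.sum_le_sum_of_subset_of_nonneg (Finset.subset_univ {j, i}) fun y _ _ => hp0 y
  rw [Finset.sum_pair h, hp] at this
  linarith

section Margin

variable {ι : Type*}

noncomputable def margin (u : ι → ℝ) (i : ι) : ℝ := u i - ⨆ j : {j // j ≠ i}, u j

theorem le_iSup_ne [Finite ι] (u : ι → ℝ) {i j : ι} (h : j ≠ i) :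
    u j ≤ ⨆ k : {k // k ≠ i}, u k :=
  le_ciSup (f := fun k : {k // k ≠ i} => u k) (Finite.bddAbove_range _) ⟨j, h⟩

theorem margin_add_margin_nonpos [Finite ι] (u : ι → ℝ) {i j : ι} (h : j ≠ i) :
    margin u j + margin u i ≤ 0 := by
  have := le_iSup_ne u h
  have := le_iSup_ne u h.symm
  simp only [margin]
  linarith

theorem margin_nonneg [Nontrivial ι] {u : ι → ℝ} {i : ι} (hi : ∀ j, u j ≤ u i) :
    0 ≤ margin u i := by
  have : Nonempty {j // j ≠ i} := nonempty_subtype.2 (exists_ne i)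
  exact sub_nonneg.2 (ciSup_le fun j => hi j)

theorem le_of_margin_pos [Finite ι] {u : ι → ℝ} {i : ι} (h : 0 < margin u i) (j : ι) :
    u j ≤ u i := by
  rcases eq_or_ne j i with rfl | hj
  · rfl
  · have := le_iSup_ne u hj
    simp only [margin] at h
    linarith

theorem eq_of_margin_pos [Finite ι] [Nontrivial ι] {u : ι → ℝ} {i j : ι} (hi : 0 < margin u i)
    (hj : ∀ k, u k ≤ u j) : j = i := by
  by_contra h
  linarith [margin_add_margin_nonpos u h, margin_nonneg hj]

end Margin

theorem ENNReal.sub_le_sub_div_of_mul_add_le {a b c e k : ℝ≥0∞} (hk0 : k ≠ 0) (hk : k ≠ ∞)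
    (he : e ≠ ∞) (h : k * a + e ≤ c + k * b) : a - b ≤ (c - e) / k := by
  rw [ENNReal.le_div_iff_mul_le (Or.inl hk0) (Or.inl hk)]
  rcases le_total a b with hab | hba
  · simp [tsub_eq_zero_of_le hab]
  rcases eq_or_ne b ∞ with rfl | hb
  · simp
  refine ENNReal.le_sub_of_add_le_right he
    ((ENNReal.add_le_add_iff_right (ENNReal.mul_ne_top hb hk)).1 ?_)
  calc (a - b) * k + e + b * k = a * k + e := by
        rw [add_right_comm, ← add_mul, tsub_add_cancel_of_le hba]
    _ ≤ c + b * k := by simpa only [mul_comm] using h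

theorem ENNReal.ofReal_mul_add_le_of_le {k a b c e : ℝ} (hk : 0 ≤ k) (ha : 0 ≤ a) (he : 0 ≤ e)
    (h : k * a + e ≤ c + k * b) :
    ENNReal.ofReal k * ENNReal.ofReal a + ENNReal.ofReal e
      ≤ ENNReal.ofReal c + ENNReal.ofReal k * ENNReal.ofReal b := by
  rw [← ENNReal.ofReal_mul hk, ← ENNReal.ofReal_mul hk, ← ENNReal.ofReal_add (mul_nonneg hk ha) he]
  exact (ENNReal.ofReal_le_ofReal h).trans ENNReal.ofReal_add_le

theorem lintegral_sub_le_sub_div_of_mul_add_le {X : Type*} [MeasurableSpace X] {ν : Measure X}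
    {k : ℝ≥0∞} (hk0 : k ≠ 0) (hk : k ≠ ∞) {a b c e : X → ℝ≥0∞} (ha : Measurable a)
    (hc : Measurable c) (he : ∫⁻ x, e x ∂ν ≠ ∞) (h : ∀ x, k * a x + e x ≤ c x + k * b x) :
    ∫⁻ x, a x ∂ν - ∫⁻ x, b x ∂ν ≤ (∫⁻ x, c x ∂ν - ∫⁻ x, e x ∂ν) / k := by
  refine ENNReal.sub_le_sub_div_of_mul_add_le hk0 hk he ?_
  rw [← lintegral_const_mul k ha, ← lintegral_const_mul' k b hk,
    ← lintegral_add_left (ha.const_mul k), ← lintegral_add_left hc]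
  exact lintegral_mono h

section Disintegration

variable {X Y : Type*} [MeasurableSpace X] [MeasurableSpace Y] [Nonempty Y] [StandardBorelSpace Y]

noncomputable def condProb (D : Measure (X × Y)) [IsFiniteMeasure D] (x : X) (y : Y) : ℝ :=
  (D.condKernel x {y}).toReal

variable (D : Measure (X × Y)) [IsFiniteMeasure D]

theorem condProb_nonneg (x : X) (y : Y) : 0 ≤ condProb D x y := ENNReal.toReal_nonneg

theorem measurable_condProb (y : Y) : Measurable fun x => condProb D x y :=
  (D.condKernel.measurable_coe (measurableSet_singleton y)).ennreal_toReal

variable [Fintype Y]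

theorem sum_condProb (x : X) : ∑ y, condProb D x y = 1 := by
  simp only [condProb]
  rw [← ENNReal.toReal_sum fun y _ => measure_ne_top _ _, sum_measure_singleton, Finset.coe_univ,
    measure_univ, ENNReal.toReal_one]

theorem lintegral_ofReal_eq_lintegral_sum_condProb {F : X → Y → ℝ} (hF0 : ∀ x y, 0 ≤ F x y)
    (hF : ∀ y, Measurable fun x => F x y) :
    ∫⁻ z, ENNReal.ofReal (F z.1 z.2) ∂D
      = ∫⁻ x, ENNReal.ofReal (∑ y, condProb D x y * F x y) ∂D.fst := by
  have hFm : Measurable fun z : X × Y => ENNReal.ofReal (F z.1 z.2) :=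
    measurable_from_prod_countable_left fun y => (hF y).ennreal_ofReal
  calc ∫⁻ z, ENNReal.ofReal (F z.1 z.2) ∂D
      = ∫⁻ z, ENNReal.ofReal (F z.1 z.2) ∂(D.fst ⊗ₘ D.condKernel) := by rw [D.disintegrate]
    _ = ∫⁻ x, ∫⁻ y, ENNReal.ofReal (F x y) ∂D.condKernel x ∂D.fst :=
      Measure.lintegral_compProd hFm
    _ = _ := by
      refine lintegral_congr fun x => ?_
      rw [lintegral_fintype, ENNReal.ofReal_sum_of_nonneg fun y _ =>
        mul_nonneg (condProb_nonneg D x y) (hF0 x y)]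
      refine Finset.sum_congr rfl fun y _ => ?_
      rw [ENNReal.ofReal_mul (condProb_nonneg D x y), condProb,
        ENNReal.ofReal_toReal (measure_ne_top _ _), mul_comm]

end Disintegration

section CrammerSinger

variable {n : ℕ}

theorem psiCS_eq_max_margin (y : Fin n) (u : Fin n → ℝ) : psiCS n y u = max (1 - margin u y) 0 := by
  rw [psiCS, margin]
  ring_nf

theorem psiCS_nonneg (y : Fin n) (u : Fin n → ℝ) : 0 ≤ psiCS n y u := le_max_right _ _

theorem measurable_psiCS (y : Fin n) : Measurable (psiCS n y) := by
  unfold psiCS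
  fun_prop

theorem top1_eq {u : Fin n → ℝ} {i : Fin n} (hi : ∀ j, u j ≤ u i) : top1 n u = u i :=
  have : Nonempty (Fin n) := ⟨i⟩
  le_antisymm (ciSup_le hi) (le_ciSup (Finite.bddAbove_range u) i)

theorem top2_eq [Nontrivial (Fin n)] {u : Fin n → ℝ} {i : Fin n} (hi : ∀ j, u j ≤ u i) :
    top2 n u = ⨆ j : {j // j ≠ i}, u j := by
  refine le_antisymm (ciInf_le (Finite.bddBelow_range _) i) (le_ciInf fun k => ?_)
  rcases eq_or_ne k i with rfl | hk
  · rfl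
  · have : Nonempty {j // j ≠ i} := nonempty_subtype.2 (exists_ne i)
    exact ciSup_le fun j => (hi j).trans (le_iSup_ne u hk.symm)

theorem top1_sub_top2 [Nontrivial (Fin n)] {u : Fin n → ℝ} {i : Fin n} (hi : ∀ j, u j ≤ u i) :
    top1 n u - top2 n u = margin u i := by
  rw [top1_eq hi, top2_eq hi, margin]

theorem predCS_eq_castSucc_iff [Nontrivial (Fin n)] {τ : ℝ} (hτ : 0 < τ) {u : Fin n → ℝ}
    {t : Fin n} : predCS n τ u = Fin.castSucc t ↔ τ < margin u t := by
  rw [predCS]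
  split_ifs with h
  · rw [Fin.castSucc_inj]
    have hmax := h.2.choose_spec
    rw [top1_sub_top2 hmax] at h
    constructor
    · rintro rfl
      exact h.1
    · intro ht
      exact eq_of_margin_pos (hτ.trans ht) hmax
  · refine iff_of_false (Fin.castSucc_ne_last t).symm fun ht =>
      h ⟨?_, t, le_of_margin_pos (hτ.trans ht)⟩
    rwa [top1_sub_top2 (le_of_margin_pos (hτ.trans ht))]

theorem predCS_eq_last [Nontrivial (Fin n)] {τ : ℝ} (hτ : 0 < τ) {u : Fin n → ℝ} {i : Fin n}
    (hi : ∀ j, u j ≤ u i) (h : margin u i ≤ τ) : predCS n τ u = Fin.last n := by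
  by_contra hne
  obtain ⟨t, ht⟩ := Fin.exists_castSucc_eq.2 hne
  rw [eq_comm, predCS_eq_castSucc_iff hτ] at ht
  rcases eq_or_ne t i with rfl | hti
  · linarith
  · linarith [margin_add_margin_nonpos u hti, margin_nonneg hi]

theorem measurable_margin (i : Fin n) : Measurable fun u : Fin n → ℝ => margin u i := by
  unfold margin
  fun_prop

theorem measurable_predCS [Nontrivial (Fin n)] {τ : ℝ} (hτ : 0 < τ) : Measurable (predCS n τ) := by
  have hcast : ∀ t : Fin n, MeasurableSet (predCS n τ ⁻¹' {Fin.castSucc t}) := fun t => by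
    simp only [Set.preimage, Set.mem_singleton_iff, predCS_eq_castSucc_iff hτ]
    exact measurableSet_lt measurable_const (measurable_margin t)
  refine measurable_to_countable' fun c => ?_
  induction c using Fin.lastCases with
  | cast t => exact hcast t
  | last =>
    have : predCS n τ ⁻¹' {Fin.last n} = (⋃ t, predCS n τ ⁻¹' {Fin.castSucc t})ᶜ := by
      ext u
      rcases Fin.eq_castSucc_or_eq_last (predCS n τ u) with ⟨t, ht⟩ | ht <;>
        simp [ht, Fin.castSucc_ne_last, eq_comm]
    rw [this]
    exact (MeasurableSet.iUnion hcast).compl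

noncomputable def condAbstainRisk (p : Fin n → ℝ) (t : Fin (n + 1)) : ℝ :=
  ∑ y, p y * abstainLoss n (1/2) y t

noncomputable def condPsiRisk (p : Fin n → ℝ) (u : Fin n → ℝ) : ℝ :=
  ∑ y, p y * psiCS n y u

theorem abstainLoss_nonneg (y : Fin n) (t : Fin (n + 1)) : 0 ≤ abstainLoss n (1/2) y t := by
  unfold abstainLoss
  split_ifs <;> norm_num

theorem condAbstainRisk_nonneg {p : Fin n → ℝ} (hp0 : ∀ y, 0 ≤ p y) (t : Fin (n + 1)) :
    0 ≤ condAbstainRisk p t :=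
  Finset.sum_nonneg fun y _ => mul_nonneg (hp0 y) (abstainLoss_nonneg y t)

theorem condAbstainRisk_last {p : Fin n → ℝ} (hp : ∑ y, p y = 1) :
    condAbstainRisk p (Fin.last n) = 1/2 := by
  simp [condAbstainRisk, abstainLoss, ← Finset.sum_mul, hp]

theorem condAbstainRisk_castSucc {p : Fin n → ℝ} (hp : ∑ y, p y = 1) (i : Fin n) :
    condAbstainRisk p (Fin.castSucc i) = 1 - p i := by
  have (y : Fin n) : abstainLoss n (1/2) y (Fin.castSucc i) = if y = i then 0 else 1 := by
    simp [abstainLoss, Fin.castSucc_ne_last, Fin.val_inj, eq_comm]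
  simp only [condAbstainRisk, this, sum_mul_ite_eq hp]
  ring

theorem min_le_condAbstainRisk {p : Fin n → ℝ} (hp : ∑ y, p y = 1)
    (t : Fin (n + 1)) : min (1 - ⨆ y, p y) (1/2) ≤ condAbstainRisk p t := by
  induction t using Fin.lastCases with
  | last => exact (min_le_right _ _).trans_eq (condAbstainRisk_last hp).symm
  | cast i =>
    rw [condAbstainRisk_castSucc hp]
    have := le_ciSup (Finite.bddAbove_range p) i
    linarith [min_le_left (1 - ⨆ y, p y) (1/2)]

theorem condPsiRisk_nonneg {p : Fin n → ℝ} (hp0 : ∀ y, 0 ≤ p y) (u : Fin n → ℝ) :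
    0 ≤ condPsiRisk p u :=
  Finset.sum_nonneg fun y _ => mul_nonneg (hp0 y) (psiCS_nonneg y u)

theorem condPsiRisk_ge {p : Fin n → ℝ} (hp0 : ∀ y, 0 ≤ p y) (hp : ∑ y, p y = 1)
    {u : Fin n → ℝ} {i : Fin n} {a : ℝ} (ha : a ≤ psiCS n i u) :
    p i * a + (1 - p i) * (1 + margin u i) ≤ condPsiRisk p u := by
  have hle (y : Fin n) : (if y = i then a else 1 + margin u i) ≤ psiCS n y u := by
    split_ifs with hy
    · exact hy ▸ ha
    · rw [psiCS_eq_max_margin]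
      linarith [margin_add_margin_nonpos u hy, le_max_left (1 - margin u y) 0]
  calc p i * a + (1 - p i) * (1 + margin u i)
      = ∑ y, p y * (if y = i then a else 1 + margin u i) := by rw [sum_mul_ite_eq hp]; ring
    _ ≤ condPsiRisk p u := Finset.sum_le_sum fun y _ => mul_le_mul_of_nonneg_left (hle y) (hp0 y)

noncomputable def majorityIndicator (p : Fin n → ℝ) : Fin n → ℝ :=
  fun j => if 1/2 < p j then 1 else 0

theorem psiCS_zero [Nontrivial (Fin n)] (y : Fin n) : psiCS n y 0 = 1 := by
  have : Nonempty {j // j ≠ y} := nonempty_subtype.2 (exists_ne y)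
  simp [psiCS]

theorem psiCS_single [Nontrivial (Fin n)] (y i : Fin n) :
    psiCS n y (Pi.single i 1) = if y = i then 0 else 2 := by
  have : Nonempty {j // j ≠ y} := nonempty_subtype.2 (exists_ne y)
  rcases eq_or_ne y i with rfl | hy
  · have (j : {j // j ≠ y}) : (Pi.single y 1 : Fin n → ℝ) j = 0 := Pi.single_eq_of_ne j.2 _
    simp [psiCS, this]
  · have : (⨆ j : {j // j ≠ y}, (Pi.single i 1 : Fin n → ℝ) j) = 1 := by
      refine le_antisymm (ciSup_le fun j => ?_) ((le_iSup_ne _ hy.symm).trans_eq' (by simp))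
      rw [Pi.single_apply]; split_ifs <;> norm_num
    simp [psiCS, this, hy]
    norm_num

theorem condPsiRisk_majorityIndicator_le [Nontrivial (Fin n)] {p : Fin n → ℝ}
    (hp0 : ∀ y, 0 ≤ p y) (hp : ∑ y, p y = 1) :
    condPsiRisk p (majorityIndicator p) ≤ min 1 (2 * (1 - ⨆ y, p y)) := by
  by_cases hmaj : ∃ i, 1/2 < p i
  · obtain ⟨i, hi⟩ := hmaj
    have hsmall (j : Fin n) (hj : j ≠ i) : p j ≤ 1/2 := by linarith [le_one_sub_of_ne hp0 hp hj]
    have hind : majorityIndicator p = Pi.single i 1 := by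
      ext j
      rcases eq_or_ne j i with rfl | hj
      · simp only [majorityIndicator, if_pos hi, Pi.single_eq_same]
      · simp only [majorityIndicator, if_neg (hsmall j hj).not_gt, Pi.single_eq_of_ne hj]
    have hsup : (⨆ y, p y) ≤ p i := ciSup_le fun j => by
      rcases eq_or_ne j i with rfl | hj
      · rfl
      · linarith [hsmall j hj]
    simp only [condPsiRisk, hind, psiCS_single, sum_mul_ite_eq hp]
    exact le_min (by linarith) (by linarith)
  · push Not at hmaj
    have hind : majorityIndicator p = 0 := by
      ext j
      simp only [majorityIndicator, if_neg (hmaj j).not_gt, Pi.zero_apply]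
    have hsup : (⨆ y, p y) ≤ 1/2 := ciSup_le hmaj
    simp only [condPsiRisk, hind, psiCS_zero, mul_one, hp]
    exact le_min le_rfl (by linarith)

theorem condRisk_calibration [Nontrivial (Fin n)] {τ : ℝ} (hτ0 : 0 < τ) (hτ1 : τ < 1)
    {p : Fin n → ℝ} (hp0 : ∀ y, 0 ≤ p y) (hp : ∑ y, p y = 1) (u : Fin n → ℝ) :
    2 * min τ (1 - τ) * condAbstainRisk p (predCS n τ u) + condPsiRisk p (majorityIndicator p)
      ≤ condPsiRisk p u + 2 * min τ (1 - τ) * min (1 - ⨆ y, p y) (1/2) := by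
  obtain ⟨i, hi⟩ := Finite.exists_max u
  set g := margin u i
  set P := ⨆ y, p y
  have hg : 0 ≤ g := margin_nonneg hi
  have hS₁ : p i * (1 - g) + (1 - p i) * (1 + g) ≤ condPsiRisk p u := by
    refine condPsiRisk_ge hp0 hp ?_
    rw [psiCS_eq_max_margin]
    exact le_max_left _ _
  have hS₂ : p i * 0 + (1 - p i) * (1 + g) ≤ condPsiRisk p u :=
    condPsiRisk_ge hp0 hp (psiCS_nonneg i u)
  have hE := condPsiRisk_majorityIndicator_le hp0 hp
  have hpi : p i ≤ P := le_ciSup (Finite.bddAbove_range p) i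
  have hpi1 : p i ≤ 1 := hp ▸ Finset.single_le_sum (fun y _ => hp0 y) (Finset.mem_univ i)
  have hm₁ : min τ (1 - τ) ≤ τ := min_le_left _ _
  have hm₂ : min τ (1 - τ) ≤ 1 - τ := min_le_right _ _
  have hm₀ : 0 < min τ (1 - τ) := lt_min hτ0 (by linarith)
  rcases lt_or_ge τ g with hgap | hgap
  · rw [(predCS_eq_castSucc_iff hτ0).2 hgap, condAbstainRisk_castSucc hp]
    rcases le_or_gt P (1/2) with hP | hP
    · rw [min_eq_right (by linarith : (1:ℝ)/2 ≤ 1 - P)]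
      nlinarith [min_le_left 1 (2 * (1 - P))]
    · rw [min_eq_left (by linarith : 1 - P ≤ (1:ℝ)/2)]
      have := min_le_right 1 (2 * (1 - P))
      -- for `g ≥ 1` the bound `hS₂` suffices, for `g < 1` the bound `hS₁`
      rcases le_or_gt 1 g with hg1 | hg1
      · nlinarith [mul_nonneg (sub_nonneg.2 hpi1) (sub_nonneg.2 hg1),
          mul_nonneg (by linarith : 0 ≤ 1 - min τ (1 - τ)) (sub_nonneg.2 hpi)]
      · nlinarith [mul_nonneg (sub_nonneg.2 hg1.le) (by linarith : 0 ≤ 2 * P - 1),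
          mul_nonneg (sub_nonneg.2 hpi) (by linarith : 0 ≤ g - min τ (1 - τ))]
  · rw [predCS_eq_last hτ0 hi hgap, condAbstainRisk_last hp]
    rcases le_or_gt P (1/2) with hP | hP
    · rw [min_eq_right (by linarith : (1:ℝ)/2 ≤ 1 - P)]
      nlinarith [min_le_left 1 (2 * (1 - P))]
    · rw [min_eq_left (by linarith : 1 - P ≤ (1:ℝ)/2)]
      nlinarith [min_le_right 1 (2 * (1 - P))]

section Risk

variable {X : Type*} [MeasurableSpace X] [Nonempty (Fin n)] (D : Measure (X × Fin n))
  [IsFiniteMeasure D]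

theorem lintegral_abstainLoss_eq {h : X → Fin (n + 1)} (hh : Measurable h) :
    ∫⁻ z, ENNReal.ofReal (abstainLoss n (1/2) z.2 (h z.1)) ∂D
      = ∫⁻ x, ENNReal.ofReal (condAbstainRisk (condProb D x) (h x)) ∂D.fst :=
  lintegral_ofReal_eq_lintegral_sum_condProb D (fun _ _ => abstainLoss_nonneg _ _)
    fun y => (measurable_of_countable (abstainLoss n (1/2) y)).comp hh

theorem lintegral_psiCS_eq {g : X → Fin n → ℝ} (hg : Measurable g) :
    ∫⁻ z, ENNReal.ofReal (psiCS n z.2 (g z.1)) ∂D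
      = ∫⁻ x, ENNReal.ofReal (condPsiRisk (condProb D x) (g x)) ∂D.fst :=
  lintegral_ofReal_eq_lintegral_sum_condProb D (fun _ _ => psiCS_nonneg _ _)
    fun y => (measurable_psiCS y).comp hg

theorem measurable_condAbstainRisk {h : X → Fin (n + 1)} (hh : Measurable h) :
    Measurable fun x => condAbstainRisk (condProb D x) (h x) :=
  Finset.measurable_sum _ fun y _ =>
    (measurable_condProb D y).mul ((measurable_of_countable (abstainLoss n (1/2) y)).comp hh)

theorem measurable_condPsiRisk {g : X → Fin n → ℝ} (hg : Measurable g) :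
    Measurable fun x => condPsiRisk (condProb D x) (g x) :=
  Finset.measurable_sum _ fun y _ => (measurable_condProb D y).mul ((measurable_psiCS y).comp hg)

theorem lintegral_min_le_iInf_lintegral_abstainLoss :
    ∫⁻ x, ENNReal.ofReal (min (1 - ⨆ y, condProb D x y) (1/2)) ∂D.fst
      ≤ ⨅ h : {h : X → Fin (n + 1) // Measurable h},
          ∫⁻ z, ENNReal.ofReal (abstainLoss n (1/2) z.2 (h.1 z.1)) ∂D :=
  le_iInf fun h => (lintegral_abstainLoss_eq D h.2).symm ▸ lintegral_mono fun x =>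
    ENNReal.ofReal_le_ofReal (min_le_condAbstainRisk (sum_condProb D x) _)

theorem measurable_majorityIndicator_condProb :
    Measurable fun x => majorityIndicator (condProb D x) :=
  measurable_pi_lambda _ fun j =>
    Measurable.ite (measurableSet_lt measurable_const (measurable_condProb D j)) measurable_const
      measurable_const

theorem iInf_lintegral_psiCS_le :
    ⨅ g : {g : X → Fin n → ℝ // Measurable g}, ∫⁻ z, ENNReal.ofReal (psiCS n z.2 (g.1 z.1)) ∂D
      ≤ ∫⁻ x, ENNReal.ofReal
          (condPsiRisk (condProb D x) (majorityIndicator (condProb D x))) ∂D.fst := by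
  have hm := measurable_majorityIndicator_condProb D
  rw [← lintegral_psiCS_eq D hm]
  exact iInf_le (fun g : {g : X → Fin n → ℝ // Measurable g} =>
    ∫⁻ z, ENNReal.ofReal (psiCS n z.2 (g.1 z.1)) ∂D) ⟨_, hm⟩

end Risk

theorem lintegral_condPsiRisk_majorityIndicator_ne_top {X : Type*} [MeasurableSpace X]
    [Nontrivial (Fin n)] (D : Measure (X × Fin n)) [IsFiniteMeasure D] :
    ∫⁻ x, ENNReal.ofReal (condPsiRisk (condProb D x) (majorityIndicator (condProb D x))) ∂D.fst
      ≠ ∞ :=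
  (IsFiniteMeasure.lintegral_lt_top_of_bounded_to_ennreal _ ⟨1, fun x => by
    simpa using (condPsiRisk_majorityIndicator_le (condProb_nonneg D x) (sum_condProb D x)).trans
      (min_le_left _ _)⟩).ne

end CrammerSinger

theorem psiCS_excess_risk_bound (n : ℕ) (hn : 2 ≤ n) (τ : ℝ) (hτ0 : 0 < τ) (hτ1 : τ < 1)
    {X : Type*} [MeasurableSpace X] (D : Measure (X × Fin n)) [IsProbabilityMeasure D]
    (f : X → Fin n → ℝ) (hf : Measurable f) :
    (∫⁻ z, ENNReal.ofReal (abstainLoss n (1/2) z.2 (predCS n τ (f z.1))) ∂D) -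
      (⨅ h : {h : X → Fin (n + 1) // Measurable h},
        ∫⁻ z, ENNReal.ofReal (abstainLoss n (1/2) z.2 (h.1 z.1)) ∂D) ≤
    ((∫⁻ z, ENNReal.ofReal (psiCS n z.2 (f z.1)) ∂D) -
      (⨅ g : {g : X → Fin n → ℝ // Measurable g},
        ∫⁻ z, ENNReal.ofReal (psiCS n z.2 (g.1 z.1)) ∂D)) /
      ENNReal.ofReal (2 * min τ (1 - τ)) := by
  have : Nontrivial (Fin n) := Fin.nontrivial_iff_two_le.2 hn
  have hκ : 0 < 2 * min τ (1 - τ) := by linarith [lt_min hτ0 (sub_pos.2 hτ1)]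
  have hpred : Measurable fun x => predCS n τ (f x) := (measurable_predCS hτ0).comp hf
  calc _ ≤ ∫⁻ z, ENNReal.ofReal (abstainLoss n (1/2) z.2 (predCS n τ (f z.1))) ∂D
          - ∫⁻ x, ENNReal.ofReal (min (1 - ⨆ y, condProb D x y) (1/2)) ∂D.fst :=
        tsub_le_tsub_left (lintegral_min_le_iInf_lintegral_abstainLoss D) _
    _ ≤ (∫⁻ z, ENNReal.ofReal (psiCS n z.2 (f z.1)) ∂D - ∫⁻ x, ENNReal.ofReal
          (condPsiRisk (condProb D x) (majorityIndicator (condProb D x))) ∂D.fst)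
          / ENNReal.ofReal (2 * min τ (1 - τ)) := by
        rw [lintegral_abstainLoss_eq D hpred, lintegral_psiCS_eq D hf]
        refine lintegral_sub_le_sub_div_of_mul_add_le (ENNReal.ofReal_pos.2 hκ).ne'
          ENNReal.ofReal_ne_top (measurable_condAbstainRisk D hpred).ennreal_ofReal
          (measurable_condPsiRisk D hf).ennreal_ofReal
          (lintegral_condPsiRisk_majorityIndicator_ne_top D) fun x => ?_
        exact ENNReal.ofReal_mul_add_le_of_le hκ.le (condAbstainRisk_nonneg (condProb_nonneg D x) _)
          (condPsiRisk_nonneg (condProb_nonneg D x) _)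
          (condRisk_calibration hτ0 hτ1 (condProb_nonneg D x) (sum_condProb D x) (f x))
    _ ≤ _ := by
        gcongr
        exact iInf_lintegral_psiCS_le D
end

section
/- Let n ≥ 2 and τ ∈ (−1,1). For every p in the probability simplex Δ_n and every u ∈ [−1,1]^n, Σ_y p_y ψ^OVA(y,u) − inf_{u'∈R^n} Σ_y p_y ψ^OVA(y,u') ≥ 2(1 − |τ|) · ( p·ℓ_{pred^OVA_τ(u)} − min_{t∈[n+1]} p·ℓ_t ), where ℓ = ℓ^{1/2} is the abstain(1/2) loss. -/
open scoped BigOperators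

/-- One-vs-all hinge surrogate: `ψ^OVA(y,u) = (1 − u_y)_+ + Σ_{i≠y} (1 + u_i)_+`. -/
noncomputable def psiOVA (n : ℕ) (y : Fin n) (u : Fin n → ℝ) : ℝ :=
  max (1 - u y) 0 + ∑ i ∈ Finset.univ.erase y, max (1 + u i) 0

lemma psiOVA_nonneg (n : ℕ) (y : Fin n) (u : Fin n → ℝ) : 0 ≤ psiOVA n y u :=
  add_nonneg (le_max_right _ _) (Finset.sum_nonneg fun _ _ => le_max_right _ _)

lemma exp_psi (n : ℕ) (p : Fin n → ℝ) (hp1 : ∑ i, p i = 1) (v : Fin n → ℝ)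
    (hv : ∀ i, -1 ≤ v i ∧ v i ≤ 1) :
    ∑ y, p y * psiOVA n y v = n + ∑ i, v i * (1 - 2 * p i) := by
  have h1 : ∀ y : Fin n, psiOVA n y v
      = (1 - v y) + ((∑ i, (1 + v i)) - (1 + v y)) := by
    intro y
    unfold psiOVA
    have hm : ∀ i : Fin n, max (1 + v i) 0 = 1 + v i := fun i =>
      max_eq_left (by linarith [(hv i).1])
    have hm2 : max (1 - v y) 0 = 1 - v y := max_eq_left (by linarith [(hv y).2])
    rw [hm2]
    congr 1
    rw [Finset.sum_congr rfl (fun i _ => hm i),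
      Finset.sum_erase_eq_sub (Finset.mem_univ y)]
  have hS : (∑ i, (1 + v i)) = n + ∑ i, v i := by
    rw [Finset.sum_add_distrib, Finset.sum_const, Finset.card_univ,
      Fintype.card_fin, nsmul_eq_mul, mul_one]
  calc ∑ y, p y * psiOVA n y v
      = ∑ y, (p y * (n + ∑ i, v i) - 2 * (p y * v y)) := by
        refine Finset.sum_congr rfl fun y _ => ?_
        rw [h1 y, hS]; ring
    _ = (∑ y, p y) * (n + ∑ i, v i) - 2 * ∑ y, p y * v y := by
        rw [Finset.sum_sub_distrib, ← Finset.sum_mul, Finset.mul_sum]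
    _ = n + ∑ i, v i * (1 - 2 * p i) := by
        rw [hp1]
        have : ∑ i, v i * (1 - 2 * p i) = ∑ i, (v i - 2 * (p i * v i)) := by
          refine Finset.sum_congr rfl fun i _ => by ring
        rw [this, Finset.sum_sub_distrib, Finset.mul_sum]
        ring

lemma exp_abstain_last (n : ℕ) (α : ℝ) (p : Fin n → ℝ) (hp1 : ∑ i, p i = 1) :
    ∑ y, p y * abstainLoss n α y (Fin.last n) = α := by
  simp [abstainLoss, ← Finset.sum_mul, hp1]

lemma exp_abstain_cast (n : ℕ) (α : ℝ) (p : Fin n → ℝ) (hp1 : ∑ i, p i = 1) (j : Fin n) :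
    ∑ y, p y * abstainLoss n α y (Fin.castSucc j) = 1 - p j := by
  have hne : Fin.castSucc j ≠ Fin.last n := (Fin.castSucc_lt_last j).ne
  have h1 : ∀ y : Fin n, p y * abstainLoss n α y (Fin.castSucc j)
      = p y - (if y = j then p y else 0) := by
    intro y
    simp only [abstainLoss, if_neg hne, Fin.coe_castSucc]
    rcases eq_or_ne y j with rfl | hy
    · simp
    · rw [if_neg (fun h => hy (Fin.ext h.symm)), if_neg hy]; ring
  rw [Finset.sum_congr rfl (fun y _ => h1 y), Finset.sum_sub_distrib, hp1,
    Finset.sum_ite_eq' Finset.univ j p, if_pos (Finset.mem_univ j)]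

set_option maxHeartbeats 1000000 in
/-- `pred^OVA_τ(u)`: a maximizing index `y0` if `max_j u_j > τ` (any choice of maximizer),
and `n+1` otherwise; here the maximizer `y0` is given as an argument. -/
theorem psiOVA_calibration (n : ℕ) (hn : 2 ≤ n) (τ : ℝ) (hτ0 : -1 < τ) (hτ1 : τ < 1)
    (p : Fin n → ℝ) (hp0 : ∀ i, 0 ≤ p i) (hp1 : ∑ i, p i = 1)
    (u : Fin n → ℝ) (hu : ∀ i, -1 ≤ u i ∧ u i ≤ 1)
    (y0 : Fin n) (hy0 : ∀ i, u i ≤ u y0) :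
    (∑ y, p y * psiOVA n y u) - (⨅ u' : Fin n → ℝ, ∑ y, p y * psiOVA n y u') ≥
      2 * (1 - |τ|) *
        ((∑ y, p y * abstainLoss n (1/2) y
            (if τ < u y0 then Fin.castSucc y0 else Fin.last n)) -
          ⨅ t : Fin (n + 1), ∑ y, p y * abstainLoss n (1/2) y t) := by
  have habs : |τ| < 1 := abs_lt.mpr ⟨hτ0, hτ1⟩
  have habs1 : τ ≤ |τ| := le_abs_self τ
  have habs2 : -τ ≤ |τ| := neg_le_abs τ
  have hA0 : (0:ℝ) ≤ 2 * (1 - |τ|) := by linarith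
  -- argmax of p
  obtain ⟨im, -, him⟩ := Finset.exists_max_image (Finset.univ : Finset (Fin n)) p
    ⟨y0, Finset.mem_univ y0⟩
  have him' : ∀ i, p i ≤ p im := fun i => him i (Finset.mem_univ i)
  have hpim1 : p im ≤ 1 := by
    have := Finset.single_le_sum (fun i _ => hp0 i) (Finset.mem_univ im)
    linarith [hp1 ▸ this]
  have hpair : ∀ i j : Fin n, i ≠ j → p i + p j ≤ 1 := by
    intro i j hij
    have hsub := Finset.sum_le_sum_of_subset_of_nonneg
      (Finset.subset_univ ({i, j} : Finset (Fin n))) (fun k _ _ => hp0 k)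
    rw [Finset.sum_pair hij, hp1] at hsub
    exact hsub
  set q : Fin n → ℝ := fun i => 1 - 2 * p i with hq
  set g : Fin n → ℝ := fun i => u i * q i + |q i| with hg
  have hgnn : ∀ i, 0 ≤ g i := by
    intro i
    have h1 : |u i * q i| ≤ |q i| := by
      rw [abs_mul]
      have : |u i| ≤ 1 := abs_le.mpr ⟨(hu i).1, (hu i).2⟩
      nlinarith [abs_nonneg (q i)]
    have := neg_abs_le (u i * q i)
    simp only [hg]
    linarith
  -- the minimizer for the surrogate
  set v : Fin n → ℝ := fun i => if 1 ≤ 2 * p i then 1 else -1 with hv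
  have hvb : ∀ i, -1 ≤ v i ∧ v i ≤ 1 := by
    intro i; simp only [hv]; split <;> norm_num
  have hvq : ∀ i, v i * q i = -|q i| := by
    intro i
    simp only [hv, hq]
    split
    · rename_i h
      rw [abs_of_nonpos (by linarith)]; ring
    · rename_i h
      rw [abs_of_nonneg (by linarith)]; ring
  have hbdd : BddBelow (Set.range fun u' : Fin n → ℝ => ∑ y, p y * psiOVA n y u') := by
    refine ⟨0, ?_⟩
    rintro x ⟨u', rfl⟩
    exact Finset.sum_nonneg fun y _ => mul_nonneg (hp0 y) (psiOVA_nonneg n y u')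
  have hinf1 : (⨅ u' : Fin n → ℝ, ∑ y, p y * psiOVA n y u') ≤ n + ∑ i, v i * q i := by
    have := ciInf_le hbdd v
    rwa [exp_psi n p hp1 v hvb] at this
  set m : ℝ := min (1/2 : ℝ) (1 - p im) with hm
  have hinf2 : m ≤ ⨅ t : Fin (n+1), ∑ y, p y * abstainLoss n (1/2) y t := by
    apply le_ciInf
    intro t
    induction t using Fin.lastCases with
    | last =>
        rw [exp_abstain_last n _ p hp1]
        exact min_le_left _ _
    | cast j =>
        rw [exp_abstain_cast n _ p hp1 j]
        exact le_trans (min_le_right _ _) (by linarith [him' j])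
  have hLu : ∑ y, p y * psiOVA n y u = n + ∑ i, u i * q i := exp_psi n p hp1 u hu
  -- core inequality
  have hcore : ∑ i, g i ≥ 2 * (1 - |τ|) *
      ((∑ y, p y * abstainLoss n (1/2) y
        (if τ < u y0 then Fin.castSucc y0 else Fin.last n)) - m) := by
    have hsum_ge_single : ∀ i : Fin n, g i ≤ ∑ j, g j := fun i =>
      Finset.single_le_sum (fun j _ => hgnn j) (Finset.mem_univ i)
    by_cases hpred : τ < u y0
    · rw [if_pos hpred, exp_abstain_cast n _ p hp1 y0]
      by_cases hy : 1/2 ≤ p y0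
      · -- prediction regret is ≤ 0
        have hpm : p im ≤ p y0 := by
          rcases eq_or_ne im y0 with rfl | hne
          · exact le_refl _
          · linarith [hpair im y0 hne]
        have h1 : 1 - p y0 - m ≤ 0 := by
          have hy0le := him' y0
          have : m = 1 - p im := min_eq_right (by linarith)
          rw [this]; linarith
        have h2 : 2 * (1 - |τ|) * (1 - p y0 - m) ≤ 0 :=
          mul_nonpos_of_nonneg_of_nonpos hA0 h1
        have h3 : 0 ≤ ∑ j, g j := Finset.sum_nonneg fun j _ => hgnn j
        linarith
      · push_neg at hy
        have hb : 0 < q y0 := by simp only [hq]; linarith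
        have hgy0 : g y0 = q y0 * (1 + u y0) := by
          simp only [hg]
          rw [abs_of_pos hb]; ring
        by_cases hi : p im ≤ 1/2
        · have hmeq : m = 1/2 := min_eq_left (by linarith)
          have : q y0 * (1 + u y0) ≥ 2 * (1 - |τ|) * (1 - p y0 - m) := by
            rw [hmeq]
            have h1 : q y0 * (1 + u y0) ≥ q y0 * (1 + τ) := by
              nlinarith
            have h2 : q y0 * (1 + τ) ≥ q y0 * (1 - |τ|) := by nlinarith
            have h3 : q y0 * (1 - |τ|) = 2 * (1 - |τ|) * (1 - p y0 - 1/2) := by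
              simp only [hq]; ring
            nlinarith [h1, h2, h3]
          have h4 := hsum_ge_single y0
          rw [hgy0] at h4
          linarith
        · push_neg at hi
          have hmeq : m = 1 - p im := min_eq_right (by linarith)
          have hne : im ≠ y0 := fun h => by rw [h] at hi; linarith
          have hqim : q im < 0 := by simp only [hq]; linarith
          have hgim : g im = (2 * p im - 1) * (1 - u im) := by
            simp only [hg, hq]
            rw [abs_of_nonpos (by linarith)]; ring
          have hpairle : p im + p y0 ≤ 1 := hpair im y0 hne
          have hsum2 : g im + g y0 ≤ ∑ j, g j := by
            have hsub := Finset.sum_le_sum_of_subset_of_nonneg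
              (Finset.subset_univ ({im, y0} : Finset (Fin n))) (fun k _ _ => hgnn k)
            rwa [Finset.sum_pair hne] at hsub
          have key : g im + g y0 ≥ 2 * (1 - |τ|) * (1 - p y0 - (1 - p im)) := by
            rw [hgim, hgy0]
            have hu1 : u im ≤ u y0 := hy0 im
            have hu2 : u y0 ≤ 1 := (hu y0).2
            have hs : τ < u y0 := hpred
            have ha : (0:ℝ) ≤ 2 * p im - 1 := by linarith
            have hba : 2 * p im - 1 ≤ q y0 := by simp only [hq]; linarith
            have e1 : (2 * p im - 1) * (1 - u im) ≥ (2 * p im - 1) * (1 - u y0) := by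
              nlinarith
            have e2 : (2 * p im - 1) * (1 - u y0) + q y0 * (1 + u y0)
                ≥ (1 - |τ|) * ((2 * p im - 1) + q y0) := by
              nlinarith [mul_nonneg (sub_nonneg.mpr hba) (by linarith : (0:ℝ) ≤ u y0 + |τ|),
                mul_nonneg ha (abs_nonneg τ)]
            have e3 : (1 - |τ|) * ((2 * p im - 1) + q y0)
                = 2 * (1 - |τ|) * (1 - p y0 - (1 - p im)) := by
              simp only [hq]; ring
            linarith
          rw [hmeq]
          linarith
    · rw [if_neg hpred, exp_abstain_last n _ p hp1]
      push_neg at hpred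
      by_cases hi : p im ≤ 1/2
      · have hmeq : m = 1/2 := min_eq_left (by linarith)
        rw [hmeq]
        have h3 : 0 ≤ ∑ j, g j := Finset.sum_nonneg fun j _ => hgnn j
        simp only [sub_self, mul_zero]
        linarith
      · push_neg at hi
        have hmeq : m = 1 - p im := min_eq_right (by linarith)
        rw [hmeq]
        have hgim : g im = (2 * p im - 1) * (1 - u im) := by
          simp only [hg, hq]
          rw [abs_of_nonpos (by linarith)]; ring
        have huim : u im ≤ |τ| := le_trans (le_trans (hy0 im) hpred) habs1
        have ha : (0:ℝ) ≤ 2 * p im - 1 := by linarith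
        have key : g im ≥ 2 * (1 - |τ|) * (1/2 - (1 - p im)) := by
          rw [hgim]
          nlinarith
        nlinarith [hsum_ge_single im, key]
  -- combine everything
  have hsumdiff : (∑ i, u i * q i) - (∑ i, v i * q i) = ∑ i, g i := by
    rw [← Finset.sum_sub_distrib]
    refine Finset.sum_congr rfl fun i _ => ?_
    rw [hvq i]
    simp only [hg]; ring
  have hmono : 2 * (1 - |τ|) *
        ((∑ y, p y * abstainLoss n (1/2) y
            (if τ < u y0 then Fin.castSucc y0 else Fin.last n)) -
          ⨅ t : Fin (n + 1), ∑ y, p y * abstainLoss n (1/2) y t)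
      ≤ 2 * (1 - |τ|) *
        ((∑ y, p y * abstainLoss n (1/2) y
            (if τ < u y0 then Fin.castSucc y0 else Fin.last n)) - m) := by
    apply mul_le_mul_of_nonneg_left _ hA0
    linarith
  rw [ge_iff_le, hLu]
  calc 2 * (1 - |τ|) *
        ((∑ y, p y * abstainLoss n (1/2) y
            (if τ < u y0 then Fin.castSucc y0 else Fin.last n)) -
          ⨅ t : Fin (n + 1), ∑ y, p y * abstainLoss n (1/2) y t)
      ≤ ∑ i, g i := le_trans hmono hcore
    _ ≤ (n + ∑ i, u i * q i) - (⨅ u' : Fin n → ℝ, ∑ y, p y * psiOVA n y u') := by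
        linarith [hsumdiff, hinf1]
end

section
/- Let d ≥ 1, n = 2^d, and B : [n] → {−1,+1}^d a bijection. For every y ∈ [n] and every p in the probability simplex Δ_n, Σ_{i=1}^n p_i ψ^BEP(i, −B(y)) = 2(1 − p_y), where −B(y) ∈ R^d is the coordinatewise negation of B(y). -/
open scoped BigOperators

/-- The BEP surrogate. `B : Fin (2^d) ≃ (Fin d → Bool)` encodes a bijection
`[n] → {−1,+1}^d`, where `true ↦ +1` and `false ↦ −1`:
`ψ^BEP(y,u) = ( max_{j∈[d]} B_j(y) u_j + 1 )_+`. -/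
noncomputable def psiBEP (d : ℕ) (B : Fin (2 ^ d) ≃ (Fin d → Bool)) (y : Fin (2 ^ d))
    (u : Fin d → ℝ) : ℝ :=
  max ((⨆ j, (if B y j then (1 : ℝ) else -1) * u j) + 1) 0

theorem psiBEP_at_vertex (d : ℕ) (hd : 1 ≤ d) (B : Fin (2 ^ d) ≃ (Fin d → Bool))
    (y : Fin (2 ^ d)) (p : Fin (2 ^ d) → ℝ) (hp0 : ∀ i, 0 ≤ p i) (hp1 : ∑ i, p i = 1) :
    (∑ i, p i * psiBEP d B i (fun j => -(if B y j then (1 : ℝ) else -1))) =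
      2 * (1 - p y) := by
  have hne : Nonempty (Fin d) := ⟨⟨0, hd⟩⟩
  have key : ∀ i, psiBEP d B i (fun j => -(if B y j then (1 : ℝ) else -1)) =
      if i = y then 0 else 2 := by
    intro i
    unfold psiBEP
    by_cases h : i = y
    · subst h
      have hconst : ∀ j, (if B i j then (1:ℝ) else -1) * -(if B i j then (1:ℝ) else -1) = -1 := by
        intro j; by_cases hb : B i j <;> simp [hb]
      have hsup : (⨆ j, (if B i j then (1:ℝ) else -1) * -(if B i j then (1:ℝ) else -1)) = -1 := by
        simp only [hconst]; exact ciSup_const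
      simp only [hsup]
      norm_num
    · have hB : B i ≠ B y := fun hc => h (B.injective hc)
      obtain ⟨j0, hj0⟩ := Function.ne_iff.mp hB
      have hle : ∀ j, (if B i j then (1:ℝ) else -1) * -(if B y j then (1:ℝ) else -1) ≤ 1 := by
        intro j; by_cases h1 : B i j <;> by_cases h2 : B y j <;> simp [h1, h2]
      have heq : (if B i j0 then (1:ℝ) else -1) * -(if B y j0 then (1:ℝ) else -1) = 1 := by
        by_cases h1 : B i j0 <;> by_cases h2 : B y j0 <;> simp_all
      have hsup : (⨆ j, (if B i j then (1:ℝ) else -1) * -(if B y j then (1:ℝ) else -1)) = 1 := by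
        apply le_antisymm (ciSup_le hle)
        exact heq.symm.trans_le <| le_ciSup (f := fun j => (if B i j then (1:ℝ) else -1) * -(if B y j then (1:ℝ) else -1)) (Set.Finite.bddAbove (Set.finite_range _)) j0
      simp only [hsup]
      rw [if_neg h]
      norm_num
  simp only [key]
  have : ∀ i, p i * (if i = y then (0:ℝ) else 2) =
      2 * p i - (if i = y then 2 * p i else 0) := by
    intro i; by_cases h : i = y <;> simp [h, mul_comm]
  simp only [this]
  rw [Finset.sum_sub_distrib, ← Finset.mul_sum, hp1, Finset.sum_ite_eq' Finset.univ y]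
  simp
  ring
end

section
/- Let d ≥ 1, n = 2^d, and B : [n] → {−1,+1}^d a bijection. For every u ∈ R^d and every y' ∈ [n] with y' ≠ B^{-1}(sign(−u)), one has ψ^BEP(y', u) ≥ min_{j∈[d]} |u_j| + 1, where sign(−u) ∈ {−1,+1}^d is taken coordinatewise with sign(a) = 1 if a ≥ 0 and −1 if a < 0. -/
open scoped BigOperators

/-- The coordinatewise sign vector of `−u`, where `sign(a) = +1` (`true`) if `a ≥ 0`
and `−1` (`false`) if `a < 0`; so `sign(−u)_j = +1` iff `u j ≤ 0`. -/
noncomputable def signNeg (d : ℕ) (u : Fin d → ℝ) : Fin d → Bool :=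
  fun j => decide (u j ≤ 0)

theorem psiBEP_lower_bound_off_signNeg (d : ℕ) (hd : 1 ≤ d)
    (B : Fin (2 ^ d) ≃ (Fin d → Bool)) (u : Fin d → ℝ)
    (y' : Fin (2 ^ d)) (hy' : y' ≠ B.symm (signNeg d u)) :
    psiBEP d B y' u ≥ (⨅ j, |u j|) + 1 := by
  have hne : B y' ≠ signNeg d u := by
    intro h
    exact hy' (by rw [← h, Equiv.symm_apply_apply])
  obtain ⟨j, hj⟩ := Function.ne_iff.mp hne
  haveI : Nonempty (Fin d) := ⟨⟨0, hd⟩⟩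
  have hterm : (if B y' j then (1 : ℝ) else -1) * u j = |u j| := by
    unfold signNeg at hj
    by_cases hb : B y' j
    · have : ¬ u j ≤ 0 := by simpa [hb] using hj
      simp [hb, abs_of_pos (lt_of_not_ge this)]
    · have : u j ≤ 0 := by
        by_contra h
        exact hj (by simp [hb, h])
      simp [hb, abs_of_nonpos this]
  have hsup : (⨅ i, |u i|) ≤ ⨆ i, (if B y' i then (1 : ℝ) else -1) * u i := by
    calc (⨅ i, |u i|) ≤ |u j| := ciInf_le (Set.Finite.bddBelow (Set.finite_range _)) j
    _ = (if B y' j then (1 : ℝ) else -1) * u j := hterm.symm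
    _ ≤ _ := le_ciSup (f := fun i => (if B y' i then (1 : ℝ) else -1) * u i) (Set.Finite.bddAbove (Set.finite_range _)) j
  have : (⨅ j, |u j|) + 1 ≤ (⨆ j, (if B y' j then (1 : ℝ) else -1) * u j) + 1 := by
    linarith
  exact le_max_of_le_left this
end

section
/- Let d ≥ 1, n = 2^d, B : [n] → {−1,+1}^d a bijection, and τ ∈ (0,1). For every p in the probability simplex Δ_n and every u ∈ R^d, Σ_y p_y ψ^BEP(y,u) − inf_{u'∈R^d} Σ_y p_y ψ^BEP(y,u') ≥ 2 min(τ, 1−τ) · ( p·ℓ_{pred^BEP_τ(u)} − min_{t∈[n+1]} p·ℓ_t ), where ℓ = ℓ^{1/2} is the abstain(1/2) loss. -/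
open scoped BigOperators

/-- `pred^BEP_τ(u)`: `n+1` if `min_j |u_j| ≤ τ`, and `B⁻¹(sign(−u))` otherwise. -/
noncomputable def predBEP (d : ℕ) (B : Fin (2 ^ d) ≃ (Fin d → Bool)) (τ : ℝ)
    (u : Fin d → ℝ) : Fin (2 ^ d + 1) :=
  if (⨅ j, |u j|) ≤ τ then Fin.last (2 ^ d)
  else Fin.castSucc (B.symm (signNeg d u))

private lemma bddA {k : ℕ} (f : Fin k → ℝ) : BddAbove (Set.range f) :=
  (Set.finite_range f).bddAbove

private lemma bddB {k : ℕ} (f : Fin k → ℝ) : BddBelow (Set.range f) :=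
  (Set.finite_range f).bddBelow

private lemma psiBEP_nonneg {d : ℕ} (B : Fin (2^d) ≃ (Fin d → Bool)) (y : Fin (2^d))
    (u : Fin d → ℝ) : 0 ≤ psiBEP d B y u := le_max_right _ _

private lemma psiBEP_ge {d : ℕ} (B : Fin (2^d) ≃ (Fin d → Bool)) (y : Fin (2^d))
    (u : Fin d → ℝ) (j : Fin d) :
    (if B y j then (1:ℝ) else -1) * u j + 1 ≤ psiBEP d B y u := by
  refine le_trans ?_ (le_max_left _ _)
  have h := le_ciSup (bddA (fun j => (if B y j then (1:ℝ) else -1) * u j)) j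
  linarith

private lemma psiBEP_le {d : ℕ} [Nonempty (Fin d)] (B : Fin (2^d) ≃ (Fin d → Bool))
    (y : Fin (2^d)) (u : Fin d → ℝ) (a : ℝ) (ha : 0 ≤ a + 1)
    (h : ∀ j, (if B y j then (1:ℝ) else -1) * u j ≤ a) :
    psiBEP d B y u ≤ a + 1 := by
  apply max_le _ ha
  have := ciSup_le h
  linarith

private lemma arithA {τ c m q ps Ru Ri : ℝ} (hcτ : c ≤ τ) (hc1τ : c ≤ 1 - τ)
    (hm0 : 0 ≤ m) (hmt : m ≤ τ) (hq0 : 0 ≤ q) (hhalf : 1/2 ≤ ps) (hqs : q ≤ ps)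
    (hRu : q * (1-m) + (1-q) * (1+m) ≤ Ru) (hRi : Ri ≤ 2 * (1-ps)) :
    Ru - Ri ≥ 2 * c * (1/2 - (1 - ps)) := by
  nlinarith [mul_nonneg hm0 (sub_nonneg.mpr hqs),
    mul_nonneg (sub_nonneg.mpr hmt) (by linarith : (0:ℝ) ≤ 2*ps - 1),
    mul_nonneg (by linarith : (0:ℝ) ≤ 2*ps - 1) (by linarith : (0:ℝ) ≤ 1 - τ - c)]

private lemma arithB1 {τ c m q ps Ru Ri : ℝ} (hτ0 : 0 < τ) (hcτ : c ≤ τ)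
    (hc1τ : c ≤ 1 - τ) (hτm : τ ≤ m) (hm1 : m ≤ 1) (hq0 : 0 ≤ q)
    (hhalf : 1/2 ≤ ps) (hqs : q ≤ ps)
    (hRu : q * (1-m) + (1-q) * (1+m) ≤ Ru) (hRi : Ri ≤ 2 * (1-ps)) :
    Ru - Ri ≥ 2 * c * ((1 - q) - (1 - ps)) := by
  rcases le_or_gt q (1/2) with hq2 | hq2
  · nlinarith [mul_nonneg (by linarith : (0:ℝ) ≤ m - τ) (by linarith : (0:ℝ) ≤ 1 - 2*q),
      mul_nonneg (by linarith : (0:ℝ) ≤ τ - c) (by linarith : (0:ℝ) ≤ 1 - 2*q),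
      mul_nonneg (by linarith : (0:ℝ) ≤ 2*ps - 1) (by linarith : (0:ℝ) ≤ 1 - c)]
  · nlinarith [mul_nonneg (by linarith : (0:ℝ) ≤ 1 - m) (by linarith : (0:ℝ) ≤ 2*q - 1),
      mul_nonneg (by linarith : (0:ℝ) ≤ 1 - c) (by linarith : (0:ℝ) ≤ ps - q)]

private lemma arithB2 {τ c m q ps Ru Ri : ℝ} (hτ1 : τ < 1) (hcτ : c ≤ τ)
    (hm1 : 1 ≤ m) (hq1 : q ≤ 1) (hqs : q ≤ ps)
    (hRu : (1-q) * (1+m) ≤ Ru) (hRi : Ri ≤ 2 * (1-ps)) :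
    Ru - Ri ≥ 2 * c * ((1 - q) - (1 - ps)) := by
  nlinarith [mul_nonneg (by linarith : (0:ℝ) ≤ 1 - q) (by linarith : (0:ℝ) ≤ m - 1),
    mul_nonneg (by linarith : (0:ℝ) ≤ ps - q) (by linarith : (0:ℝ) ≤ 1 - c)]

private lemma arithB3 {τ c m q Ru Ri : ℝ} (hc0 : 0 ≤ c) (hcτ : c ≤ τ)
    (hτm : τ ≤ m) (hm1 : m ≤ 1) (hq0 : 0 ≤ q) (hq2 : q ≤ 1/2)
    (hRu : q * (1-m) + (1-q) * (1+m) ≤ Ru) (hRi : Ri ≤ 1) :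
    Ru - Ri ≥ 2 * c * ((1 - q) - 1/2) := by
  nlinarith [mul_nonneg (by linarith : (0:ℝ) ≤ m - τ) (by linarith : (0:ℝ) ≤ 1 - 2*q),
    mul_nonneg (by linarith : (0:ℝ) ≤ τ - c) (by linarith : (0:ℝ) ≤ 1 - 2*q)]

private lemma arithB4 {τ c m q Ru Ri : ℝ} (hτ1 : τ < 1) (hcτ : c ≤ τ)
    (hm1 : 1 ≤ m) (hq0 : 0 ≤ q) (hq2 : q ≤ 1/2)
    (hRu : (1-q) * (1+m) ≤ Ru) (hRi : Ri ≤ 1) :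
    Ru - Ri ≥ 2 * c * ((1 - q) - 1/2) := by
  nlinarith [mul_nonneg (by linarith : (0:ℝ) ≤ 1 - q) (by linarith : (0:ℝ) ≤ m - 1),
    mul_nonneg (by linarith : (0:ℝ) ≤ 1 - 2*q) (by linarith : (0:ℝ) ≤ 1 - c)]

set_option maxHeartbeats 1000000 in
theorem psiBEP_calibration (d : ℕ) (hd : 1 ≤ d) (B : Fin (2 ^ d) ≃ (Fin d → Bool))
    (τ : ℝ) (hτ0 : 0 < τ) (hτ1 : τ < 1)
    (p : Fin (2 ^ d) → ℝ) (hp0 : ∀ i, 0 ≤ p i) (hp1 : ∑ i, p i = 1) (u : Fin d → ℝ) :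
    (∑ y, p y * psiBEP d B y u) - (⨅ u' : Fin d → ℝ, ∑ y, p y * psiBEP d B y u') ≥
      2 * min τ (1 - τ) *
        ((∑ y, p y * abstainLoss (2 ^ d) (1/2) y (predBEP d B τ u)) -
          ⨅ t : Fin (2 ^ d + 1), ∑ y, p y * abstainLoss (2 ^ d) (1/2) y t) := by
  haveI : Nonempty (Fin d) := ⟨⟨0, hd⟩⟩
  set c := min τ (1 - τ) with hc
  have hcτ : c ≤ τ := min_le_left _ _
  have hc1τ : c ≤ 1 - τ := min_le_right _ _
  have hc0 : 0 < c := lt_min hτ0 (by linarith)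
  set L : Fin (2 ^ d + 1) → ℝ := fun t => ∑ y, p y * abstainLoss (2 ^ d) (1/2) y t with hLdef
  have hLlast : L (Fin.last (2 ^ d)) = 1/2 := by
    have h1 : ∀ y : Fin (2 ^ d),
        p y * abstainLoss (2 ^ d) (1/2) y (Fin.last (2 ^ d)) = p y * (1/2) := by
      intro y; rw [abstainLoss, if_pos rfl]
    simp only [hLdef]
    rw [Finset.sum_congr rfl (fun y _ => h1 y), ← Finset.sum_mul, hp1, one_mul]
  have hLcast : ∀ y' : Fin (2 ^ d), L (Fin.castSucc y') = 1 - p y' := by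
    intro y'
    have hne : Fin.castSucc y' ≠ Fin.last (2 ^ d) := (Fin.castSucc_lt_last y').ne
    have hpt : ∀ y : Fin (2 ^ d), p y * abstainLoss (2 ^ d) (1/2) y (Fin.castSucc y')
        = p y - (if y = y' then p y else 0) := by
      intro y
      simp only [abstainLoss, if_neg hne, Fin.coe_castSucc]
      by_cases h : y = y'
      · subst h; simp
      · rw [if_neg (fun hv => h (Fin.ext hv.symm)), if_neg h]; ring
    simp only [hLdef]
    rw [Finset.sum_congr rfl (fun y _ => hpt y), Finset.sum_sub_distrib, hp1,
      Finset.sum_ite_eq' Finset.univ y' p, if_pos (Finset.mem_univ y')]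
  set R : (Fin d → ℝ) → ℝ := fun v => ∑ y, p y * psiBEP d B y v with hRdef
  have hRnonneg : ∀ v, 0 ≤ R v := fun v =>
    Finset.sum_nonneg fun y _ => mul_nonneg (hp0 y) (psiBEP_nonneg B y v)
  have hRbdd : BddBelow (Set.range R) := ⟨0, by rintro x ⟨v, rfl⟩; exact hRnonneg v⟩
  have hinf_le : ∀ v, (⨅ u' : Fin d → ℝ, R u') ≤ R v := fun v => ciInf_le hRbdd v
  have hR0 : R (fun _ => 0) ≤ 1 := by
    have h1 : ∀ y : Fin (2 ^ d), psiBEP d B y (fun _ => 0) ≤ 1 := by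
      intro y
      have := psiBEP_le B y (fun _ => 0) 0 (by norm_num) (fun j => by simp)
      linarith
    calc R (fun _ => 0) ≤ ∑ y, p y * 1 :=
          Finset.sum_le_sum fun y _ => mul_le_mul_of_nonneg_left (h1 y) (hp0 y)
      _ = 1 := by rw [← Finset.sum_mul, hp1, one_mul]
  have hRv : ∀ ys : Fin (2 ^ d),
      R (fun j => if B ys j then (-1:ℝ) else 1) ≤ 2 * (1 - p ys) := by
    intro ys
    set v : Fin d → ℝ := fun j => if B ys j then (-1:ℝ) else 1 with hv
    have hpt : ∀ y : Fin (2 ^ d),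
        p y * psiBEP d B y v ≤ 2 * p y - (if y = ys then 2 * p y else 0) := by
      intro y
      by_cases h : y = ys
      · subst h
        have hψ : psiBEP d B y v ≤ 0 := by
          have := psiBEP_le B y v (-1) (by norm_num) (fun j => by
            simp only [hv]; by_cases hb : B y j <;> simp [hb])
          linarith
        rw [if_pos rfl]
        have := mul_nonpos_of_nonneg_of_nonpos (hp0 y) hψ
        linarith
      · have hψ : psiBEP d B y v ≤ 2 := by
          have := psiBEP_le B y v 1 (by norm_num) (fun j => by
            simp only [hv]; by_cases hb : B y j <;> by_cases hb' : B ys j <;>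
              simp [hb, hb'])
          linarith
        rw [if_neg h]
        have := mul_le_mul_of_nonneg_left hψ (hp0 y)
        linarith
    calc R v ≤ ∑ y, (2 * p y - (if y = ys then 2 * p y else 0)) :=
          Finset.sum_le_sum fun y _ => hpt y
      _ = 2 * (1 - p ys) := by
          rw [Finset.sum_sub_distrib, Finset.sum_ite_eq' Finset.univ ys (fun y => 2 * p y),
            if_pos (Finset.mem_univ ys), ← Finset.mul_sum, hp1]
          ring
  set m := ⨅ j, |u j| with hm
  obtain ⟨j₀, hj₀⟩ := Finite.exists_min (fun j => |u j|)
  have hmj₀ : m = |u j₀| := le_antisymm (ciInf_le (bddB _) j₀) (le_ciInf hj₀)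
  have hm0 : 0 ≤ m := hmj₀ ▸ abs_nonneg _
  have hmle : ∀ j, m ≤ |u j| := fun j => ciInf_le (bddB _) j
  set yh := B.symm (signNeg d u) with hyh
  set q := p yh with hq
  have hq0 : 0 ≤ q := hp0 yh
  have hq1 : q ≤ 1 := by
    rw [hq, ← hp1]
    exact Finset.single_le_sum (fun i _ => hp0 i) (Finset.mem_univ yh)
  have hψyh : max (1 - m) 0 ≤ psiBEP d B yh u := by
    refine max_le ?_ (psiBEP_nonneg B yh u)
    have hterm : (if B yh j₀ then (1:ℝ) else -1) * u j₀ = -|u j₀| := by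
      rw [hyh, Equiv.apply_symm_apply]
      simp only [signNeg]
      by_cases h : u j₀ ≤ 0
      · simp [h, abs_of_nonpos h]
      · push_neg at h
        simp [not_le.mpr h, abs_of_pos h]
    have h1 := psiBEP_ge B yh u j₀
    rw [hterm] at h1
    rw [hmj₀]; linarith
  have hψne : ∀ y : Fin (2 ^ d), y ≠ yh → 1 + m ≤ psiBEP d B y u := by
    intro y hy
    have hBy : B y ≠ signNeg d u := by
      intro h
      apply hy
      rw [hyh, ← h, Equiv.symm_apply_apply]
    obtain ⟨j, hj⟩ := Function.ne_iff.mp hBy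
    have hterm : (if B y j then (1:ℝ) else -1) * u j = |u j| := by
      simp only [signNeg] at hj
      by_cases h : u j ≤ 0
      · have hb : B y j = false := by
          cases hb : B y j
          · rfl
          · exact absurd (by simp [hb, h]) hj
        simp [hb, abs_of_nonpos h]
      · push_neg at h
        have hb : B y j = true := by
          cases hb : B y j
          · exact absurd (by simp [hb, not_le.mpr h]) hj
          · rfl
        simp [hb, abs_of_pos h]
    have h1 := psiBEP_ge B y u j
    rw [hterm] at h1
    have := hmle j
    linarith
  have hRlow : q * max (1 - m) 0 + (1 - q) * (1 + m) ≤ R u := by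
    have hpt : ∀ y : Fin (2 ^ d),
        p y * (1 + m) + (if y = yh then q * (max (1 - m) 0 - (1 + m)) else 0)
          ≤ p y * psiBEP d B y u := by
      intro y
      by_cases h : y = yh
      · subst h
        rw [if_pos rfl]
        have h2 := mul_le_mul_of_nonneg_left hψyh hq0
        rw [hq]
        nlinarith [h2]
      · rw [if_neg h, add_zero]
        exact mul_le_mul_of_nonneg_left (hψne y h) (hp0 y)
    calc q * max (1 - m) 0 + (1 - q) * (1 + m)
        = ∑ y, (p y * (1 + m) + (if y = yh then q * (max (1 - m) 0 - (1 + m)) else 0)) := by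
          rw [Finset.sum_add_distrib, ← Finset.sum_mul, hp1,
            Finset.sum_ite_eq' Finset.univ yh (fun _ => q * (max (1 - m) 0 - (1 + m))),
            if_pos (Finset.mem_univ yh)]
          ring
      _ ≤ R u := Finset.sum_le_sum fun y _ => hpt y
  obtain ⟨ts, hts⟩ := Finite.exists_min L
  have hLinf : (⨅ t : Fin (2 ^ d + 1), L t) = L ts :=
    le_antisymm (ciInf_le (bddB L) ts) (le_ciInf hts)
  have hmaxlb : (1:ℝ) - m ≤ max (1 - m) 0 := le_max_left _ _
  have hmax0 : (0:ℝ) ≤ max (1 - m) 0 := le_max_right _ _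
  have hRu1 : q * (1 - m) + (1 - q) * (1 + m) ≤ R u := by
    have := mul_le_mul_of_nonneg_left hmaxlb hq0
    linarith
  have hRu2 : (1 - q) * (1 + m) ≤ R u := by
    have := mul_nonneg hq0 hmax0
    linarith
  show R u - (⨅ u' : Fin d → ℝ, R u') ≥ 2 * c * (L (predBEP d B τ u) - ⨅ t, L t)
  rw [hLinf]
  by_cases hmt : m ≤ τ
  · have hpred : predBEP d B τ u = Fin.last (2 ^ d) := by
      simp only [predBEP, ← hm, if_pos hmt]
    rw [hpred, hLlast]
    rcases Fin.eq_castSucc_or_eq_last ts with ⟨ys, rfl⟩ | rfl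
    · rw [hLcast ys]
      have hhalf : (1:ℝ)/2 ≤ p ys := by
        have := hts (Fin.last (2 ^ d)); rw [hLlast, hLcast] at this; linarith
      have hqs : q ≤ p ys := by
        have := hts (Fin.castSucc yh); rw [hLcast, hLcast, ← hq] at this; linarith
      have hRi : (⨅ u' : Fin d → ℝ, R u') ≤ 2 * (1 - p ys) :=
        le_trans (hinf_le _) (hRv ys)
      exact arithA hcτ hc1τ hm0 hmt hq0 hhalf hqs hRu1 hRi
    · rw [hLlast]
      have := hinf_le u
      nlinarith
  · push_neg at hmt
    have hpred : predBEP d B τ u = Fin.castSucc yh := by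
      simp only [predBEP, ← hm, if_neg (not_le.mpr hmt), ← hyh]
    rw [hpred, hLcast, ← hq]
    rcases Fin.eq_castSucc_or_eq_last ts with ⟨ys, rfl⟩ | rfl
    · rw [hLcast ys]
      have hhalf : (1:ℝ)/2 ≤ p ys := by
        have := hts (Fin.last (2 ^ d)); rw [hLlast, hLcast] at this; linarith
      have hqs : q ≤ p ys := by
        have := hts (Fin.castSucc yh); rw [hLcast, hLcast, ← hq] at this; linarith
      have hRi : (⨅ u' : Fin d → ℝ, R u') ≤ 2 * (1 - p ys) :=
        le_trans (hinf_le _) (hRv ys)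
      rcases le_or_gt m 1 with hm1 | hm1
      · exact arithB1 hτ0 hcτ hc1τ hmt.le hm1 hq0 hhalf hqs hRu1 hRi
      · exact arithB2 hτ1 hcτ hm1.le hq1 hqs hRu2 hRi
    · rw [hLlast]
      have hq2 : q ≤ 1/2 := by
        have := hts (Fin.castSucc yh); rw [hLlast, hLcast, ← hq] at this; linarith
      have hRi : (⨅ u' : Fin d → ℝ, R u') ≤ 1 := le_trans (hinf_le _) hR0
      rcases le_or_gt m 1 with hm1 | hm1
      · exact arithB3 hc0.le hcτ hmt.le hm1 hq0 hq2 hRu1 hRi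
      · exact arithB4 hτ1 hcτ hm1.le hq0 hq2 hRu2 hRi
end

section
/- Let n ≥ 2 and τ ∈ (0,1). Let p ∈ Δ_n with p_y ≥ 1/2 for some y ∈ [n], and let u ∈ R^n satisfy u_(1) − u_(2) ≤ τ, where u_(1), u_(2) are the largest and second-largest components of u. Then Σ_{i=1}^n p_i ψ^CS(i,u) − Σ_{i=1}^n p_i ψ^CS(i, e_y) ≥ (2p_y − 1)(1 − τ), where e_y ∈ R^n is the vector with 1 in the y-th coordinate and 0 elsewhere. -/
open scoped BigOperators

theorem psiCS_case1b (n : ℕ) (hn : 2 ≤ n) (τ : ℝ) (hτ0 : 0 < τ) (hτ1 : τ < 1)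
    (p : Fin n → ℝ) (hp0 : ∀ i, 0 ≤ p i) (hp1 : ∑ i, p i = 1)
    (y : Fin n) (hy : 1 / 2 ≤ p y)
    (u : Fin n → ℝ) (hu : top1 n u - top2 n u ≤ τ) :
    (∑ i, p i * psiCS n i u) -
        (∑ i, p i * psiCS n i (fun j => if j = y then (1 : ℝ) else 0)) ≥
      (2 * p y - 1) * (1 - τ) := by
  haveI : Nontrivial (Fin n) := Fin.nontrivial_iff_two_le.mpr hn
  haveI hne : ∀ i : Fin n, Nonempty {j : Fin n // j ≠ i} := by
    intro i
    obtain ⟨j, hj⟩ := exists_ne i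
    exact ⟨⟨j, hj⟩⟩
  set e : Fin n → ℝ := fun j => if j = y then (1 : ℝ) else 0 with he
  have hbdd : ∀ (v : Fin n → ℝ) (i : Fin n),
      BddAbove (Set.range fun j : {j : Fin n // j ≠ i} => v j.1) :=
    fun v i => Set.Finite.bddAbove (Set.finite_range _)
  have hle_sup : ∀ (v : Fin n → ℝ) (i k : Fin n), k ≠ i →
      v k ≤ ⨆ j : {j : Fin n // j ≠ i}, v j.1 :=
    fun v i k hk => le_ciSup (hbdd v i) ⟨k, hk⟩
  have hsup_le : ∀ (v : Fin n → ℝ) (i : Fin n) (c : ℝ), (∀ k, k ≠ i → v k ≤ c) →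
      (⨆ j : {j : Fin n // j ≠ i}, v j.1) ≤ c :=
    fun v i c hc => ciSup_le (fun j => hc j.1 j.2)
  -- values of psiCS at e
  have hpsiy : psiCS n y e = 0 := by
    unfold psiCS
    have h1 : (⨆ j : {j : Fin n // j ≠ y}, e j.1) = 0 := by
      apply le_antisymm
      · exact hsup_le e y 0 (fun k hk => by simp [he, hk])
      · obtain ⟨k, hk⟩ := exists_ne y
        have := hle_sup e y k hk
        simpa [he, hk] using this
    rw [h1]
    simp [he]
  have hpsii : ∀ i, i ≠ y → psiCS n i e = 2 := by
    intro i hi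
    unfold psiCS
    have h1 : (⨆ j : {j : Fin n // j ≠ i}, e j.1) = 1 := by
      apply le_antisymm
      · refine hsup_le e i 1 (fun k _ => ?_)
        by_cases h : k = y <;> simp [he, h]
      · have := hle_sup e i y (fun h => hi h.symm)
        simpa [he] using this
    rw [h1]
    have h2 : e i = 0 := by simp [he, hi]
    rw [h2]; norm_num
  have hsum2 : (∑ i, p i * psiCS n i e) = 2 * (1 - p y) := by
    have hrw : ∀ i ∈ Finset.univ, p i * psiCS n i e
        = 2 * p i - (if i = y then 2 * p i else 0) := by
      intro i _
      by_cases h : i = y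
      · subst h; simp [hpsiy]
      · simp [h, hpsii i h]; ring
    rw [Finset.sum_congr rfl hrw, Finset.sum_sub_distrib, ← Finset.mul_sum, hp1,
      Finset.sum_ite_eq' Finset.univ y (fun i => 2 * p i)]
    simp; ring
  -- the max argument
  obtain ⟨is, his⟩ := Finite.exists_max u
  have hM : top1 n u = u is :=
    le_antisymm (ciSup_le his) (le_ciSup (Set.finite_range u).bddAbove is)
  have hmsle : top2 n u ≤ ⨆ j : {j : Fin n // j ≠ is}, u j.1 :=
    ciInf_le (Set.finite_range _).bddBelow is
  have hms_leM : (⨆ j : {j : Fin n // j ≠ is}, u j.1) ≤ u is :=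
    hsup_le u is _ (fun k _ => his k)
  have hδ0 : top2 n u ≤ u is := le_trans hmsle hms_leM
  have hδτ : u is - top2 n u ≤ τ := by rw [← hM]; exact hu
  set a : ℝ := top2 n u - u is + 1 with ha
  set b : ℝ := u is - top2 n u + 1 with hb
  have hlow : ∀ i, (if i = is then a else b) ≤ psiCS n i u := by
    intro i
    by_cases h : i = is
    · rw [if_pos h, h]
      refine le_trans ?_ (le_max_left _ _)
      linarith [hmsle]
    · rw [if_neg h]
      refine le_trans ?_ (le_max_left _ _)
      have h1 : u is ≤ ⨆ j : {j : Fin n // j ≠ i}, u j.1 :=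
        hle_sup u i is (fun hc => h hc.symm)
      have h2 : u i ≤ top2 n u := by
        refine le_ciInf (fun k => ?_)
        by_cases hk : k = i
        · subst hk
          exact le_trans (his k) (hle_sup u k is (fun hc => h hc.symm))
        · exact hle_sup u k i (fun hc => hk hc.symm)
      linarith
  have hsum1 : p is * a + (1 - p is) * b ≤ ∑ i, p i * psiCS n i u := by
    have heq : p is * a + (1 - p is) * b = ∑ i, p i * (if i = is then a else b) := by
      have hrw : ∀ i ∈ Finset.univ, p i * (if i = is then a else b)
          = p i * b + (if i = is then p i * (a - b) else 0) := by
        intro i _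
        by_cases h : i = is <;> simp [h] <;> ring
      rw [Finset.sum_congr rfl hrw, Finset.sum_add_distrib, ← Finset.sum_mul, hp1,
        Finset.sum_ite_eq' Finset.univ is (fun i => p i * (a - b))]
      simp; ring
    rw [heq]
    exact Finset.sum_le_sum (fun i _ => mul_le_mul_of_nonneg_left (hlow i) (hp0 i))
  rw [hsum2]
  by_cases hiy : is = y
  · subst hiy
    nlinarith [hsum1, hδτ, hδ0, hy]
  · have hpair : p is + p y ≤ 1 := by
      rw [← hp1]
      calc p is + p y = ∑ i ∈ ({is, y} : Finset (Fin n)), p i :=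
            (Finset.sum_pair hiy).symm
        _ ≤ ∑ i, p i :=
            Finset.sum_le_sum_of_subset_of_nonneg (Finset.subset_univ _)
              (fun i _ _ => hp0 i)
    nlinarith [hsum1, hδτ, hδ0, hy, hτ0.le, hp0 is, hpair]
end
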